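/- arXiv:1209.2384 — 2 statements merged into one kernel-verified Lean document; each statement's English description precedes it below -/
import Mathlib

section
/- Fix a natural number n and let P₀([n]) be the poset of nonempty subsets of [n] = {0, …, n}, viewed as a category via inclusions. The functor TopCat ⥤ Fun(P₀([n]), TopCat) sending a topological space X to the punctured cube S ↦ X × Δ^S (with the morphism for an inclusion S ⊆ T given by id_X × (the face inclusion Δ^S ↪ Δ^T), and with a continuous map f : X → Y sent to the family f × id_{Δ^S}) admits a right adjoint. (The right adjoint is the Bousfield–Kan model for the homotopy limit of a punctured cube, 𝒳 ↦ the space of natural families of maps Δ^S → 𝒳(S), i.e. the end ∫_S C(Δ^S, 𝒳(S)).) -/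
open CategoryTheory Limits

/-- The poset `P₀([n])` of nonempty subsets of `[n] = {0, …, n}`, viewed as a category
via inclusions. -/
abbrev PosetP0 (n : ℕ) := {S : Finset (Fin (n + 1)) // S.Nonempty}

/-- The topological standard simplex `Δ^S` on vertex set `S ⊆ [n]`: probability vectors
on `[n]` supported in `S` (the ambient model of the simplex `{t : S → ℝ | t ≥ 0, ∑ t = 1}`,
realized inside `ℝ^{[n]}` so that face inclusions are literally extensions by zero). -/
def simplexOn (n : ℕ) (S : Finset (Fin (n + 1))) : TopCat :=
  TopCat.of {t : Fin (n + 1) → ℝ //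
    (∀ i, 0 ≤ t i) ∧ (∀ i, i ∉ S → t i = 0) ∧ ∑ i, t i = 1}

/-- The face inclusion `Δ^S ↪ Δ^T` induced by an inclusion `S ⊆ T`
(extension of coordinates by zero). -/
def faceIncl {n : ℕ} {S T : Finset (Fin (n + 1))} (h : S ⊆ T) :
    simplexOn n S ⟶ simplexOn n T :=
  TopCat.ofHom ⟨fun t => ⟨t.val, t.2.1, fun i hi => t.2.2.1 i (fun hS => hi (h hS)), t.2.2.2⟩,
    Continuous.subtype_mk continuous_subtype_val _⟩

/-- The punctured cube `S ↦ X × Δ^S`, with structure maps `id_X × (face inclusion)`. -/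
def prodSimplexCube (n : ℕ) (X : TopCat) : PosetP0 n ⥤ TopCat where
  obj S := TopCat.of (↑X × ↑(simplexOn n S.val))
  map {S T} f := TopCat.ofHom (ContinuousMap.prodMap (ContinuousMap.id X) (faceIncl (leOfHom f)).hom)
  map_id S := by ext p <;> rfl
  map_comp f g := by ext p <;> rfl

/-- STATEMENT 8 functor: `TopCat ⥤ Fun(P₀([n]), TopCat)`, sending `X` to the punctured
cube `S ↦ X × Δ^S` and a continuous map `f : X → Y` to the family `f × id_{Δ^S}`. -/
def prodSimplexCubeFunctor (n : ℕ) : TopCat ⥤ (PosetP0 n ⥤ TopCat) where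
  obj X := prodSimplexCube n X
  map {X Y} f :=
    { app := fun S => TopCat.ofHom (ContinuousMap.prodMap f.hom (ContinuousMap.id _))
      naturality := by intro S T g; ext p <;> rfl }
  map_id X := by
    apply NatTrans.ext; funext S; ext p <;> rfl
  map_comp f g := by
    apply NatTrans.ext; funext S; ext p <;> rfl

/-!
Maps of punctured cubes `X × Δ^• ⟶ 𝒳` curry to maps from `X` into the end
`∫_S C(Δ^S, 𝒳(S))`: naturality in `S` of the cube map is exactly the compatibility condition
cutting out the end. Uncurrying back is continuous because each `Δ^S` is compact, hence locally
compact. Naturality of this bijection in `X` holds on the nose, so the end is a right adjoint.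
-/

theorem isCompact_simplexOn (n : ℕ) (S : Finset (Fin (n + 1))) :
    IsCompact {t : Fin (n + 1) → ℝ |
      (∀ i, 0 ≤ t i) ∧ (∀ i, i ∉ S → t i = 0) ∧ ∑ i, t i = 1} := by
  have hface : IsClosed {t : Fin (n + 1) → ℝ | ∀ i, i ∉ S → t i = 0} := by
    simp only [Set.ofPred_forall]
    exact isClosed_iInter fun i => isClosed_iInter fun _ =>
      isClosed_eq (continuous_apply i) continuous_const
  convert (isCompact_stdSimplex ℝ (Fin (n + 1))).inter_right hface using 1
  ext t
  simp only [stdSimplex, Set.mem_ofPred_eq, Set.mem_inter_iff]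
  tauto

instance (n : ℕ) (S : Finset (Fin (n + 1))) : CompactSpace (simplexOn n S) :=
  isCompact_iff_compactSpace.mp (isCompact_simplexOn n S)

instance (n : ℕ) (S : Finset (Fin (n + 1))) : T2Space (simplexOn n S) :=
  Topology.IsEmbedding.subtypeVal.t2Space

def cubeHolim (n : ℕ) (𝒳 : PosetP0 n ⥤ TopCat) : TopCat :=
  TopCat.of {f : ∀ S : PosetP0 n, C(simplexOn n S.1, 𝒳.obj S) //
    ∀ (S T : PosetP0 n) (h : S ⟶ T) (t : simplexOn n S.1),
      𝒳.map h (f S t) = f T (faceIncl (leOfHom h) t)}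

def cubeHolimHomEquiv (n : ℕ) (X : TopCat) (𝒳 : PosetP0 n ⥤ TopCat) :
    (prodSimplexCube n X ⟶ 𝒳) ≃ (X ⟶ cubeHolim n 𝒳) where
  toFun η := TopCat.ofHom
    ⟨fun x => ⟨fun S => (η.app S).hom.curry x,
      fun S T h t => (ConcreteCategory.congr_hom (η.naturality h) (x, t)).symm⟩,
      .subtype_mk (continuous_pi fun S => (η.app S).hom.curry.continuous) _⟩
  invFun g :=
    { app := fun S => TopCat.ofHom (ContinuousMap.uncurry
        ⟨fun x => (g x).1 S, (continuous_apply S).comp (continuous_subtype_val.comp g.hom.2)⟩)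
      naturality := fun S T h => by
        ext p
        exact ((g p.1).2 S T h p.2).symm }
  left_inv η := rfl
  right_inv g := rfl

theorem cubeHolimHomEquiv_naturality (n : ℕ) {X' X : TopCat} (𝒳 : PosetP0 n ⥤ TopCat)
    (f : X' ⟶ X) (η : prodSimplexCube n X ⟶ 𝒳) :
    cubeHolimHomEquiv n X' 𝒳 ((prodSimplexCubeFunctor n).map f ≫ η) =
      f ≫ cubeHolimHomEquiv n X 𝒳 η := by
  ext x
  rfl

/-- the functor `X ↦ (S ↦ X × Δ^S)` admits a right adjoint (the
Bousfield–Kan model for the homotopy limit of a punctured cube). -/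
theorem prodSimplexCubeFunctor_isLeftAdjoint (n : ℕ) :
    (prodSimplexCubeFunctor n).IsLeftAdjoint :=
  ⟨_, ⟨Adjunction.adjunctionOfEquivRight (G_obj := cubeHolim n) (cubeHolimHomEquiv n)
    fun _ _ 𝒳 f η => cubeHolimHomEquiv_naturality n 𝒳 f η⟩⟩
end

section
/- Fix a natural number n and let P₀([n]) be the poset of nonempty subsets of [n] = {0, …, n}, viewed as a category via inclusions. Work in the category Top_* of pointed topological spaces (topological spaces with a chosen basepoint and basepoint-preserving continuous maps, e.g. realized as the under category of the one-point space in TopCat). For a pointed space X, define the contravariant diagram V_X : P₀([n])ᵒᵖ ⥤ Top_* by V_X(S) := {f ∈ C(Δ^S, X) | f(e_s) = basepoint of X for every vertex s ∈ S}, topologized as a subspace of the compact-open mapping space and pointed by the constant map at the basepoint, with an inclusion S ⊆ T acting by restriction along the face inclusion Δ^S ↪ Δ^T. Then V_X(S) is a one-point space whenever S is a singleton (so V_X is a co-reduced diagram), and the resulting functor R^n : Top_* ⥤ coRedFun_n, X ↦ V_X, into the full subcategory coRedFun_n of Fun(P₀([n])ᵒᵖ, Top_*) spanned by diagrams whose value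 at every singleton is a one-point (zero) object, admits a left adjoint L^n. -/
open CategoryTheory Limits

/-- The singleton `{j}` as an object of `P₀([n])`. -/
def singletonObj (n : ℕ) (j : Fin (n + 1)) : PosetP0 n :=
  ⟨{j}, Finset.singleton_nonempty j⟩

/-- The vertex `e_j ∈ Δ^S` attached to `j ∈ S`. -/
def vertexPt {n : ℕ} (S : PosetP0 n) (j : ↥(S.val)) : ↑(simplexOn n S.val) :=
  ⟨fun i => if i = j.val then 1 else 0,
    fun i => by dsimp only; split <;> norm_num,
    fun i hi => by dsimp only; rw [if_neg]; rintro rfl; exact hi j.2,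
    by simp⟩

/-- The category of pointed topological spaces, realized as the under category of the
one-point space in `TopCat`. -/
abbrev PtdTop : Type 1 := Under (TopCat.of PUnit)

/-- The basepoint of a pointed space. -/
def basept (X : PtdTop) : ↑X.right := X.hom PUnit.unit

lemma basept_map {X Y : PtdTop} (f : X ⟶ Y) : f.right (basept X) = basept Y := by
  have hw := Under.w f
  show f.right (X.hom PUnit.unit) = Y.hom PUnit.unit
  rw [← hw]
  rfl

/-- `V_X(S)`: the space of continuous maps `Δ^S → X` sending every vertex of `Δ^S`
to the basepoint of `X`, topologized as a subspace of the compact-open mapping space. -/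
def VSet (n : ℕ) (X : PtdTop) (S : PosetP0 n) : Type :=
  {f : C(↑(simplexOn n S.val), ↑X.right) // ∀ j : ↥(S.val), f (vertexPt S j) = basept X}

instance (n : ℕ) (X : PtdTop) (S : PosetP0 n) : TopologicalSpace (VSet n X S) :=
  instTopologicalSpaceSubtype

/-- `V_X(S)` as a pointed space, pointed by the constant map at the basepoint. -/
def VObj (n : ℕ) (X : PtdTop) (S : PosetP0 n) : PtdTop :=
  Under.mk (Y := TopCat.of (VSet n X S))
    (TopCat.ofHom ⟨fun _ => ⟨ContinuousMap.const _ (basept X), fun _ => rfl⟩, continuous_const⟩)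

/-- Restriction `V_X(S) → V_X(T)` along the face inclusion `Δ^T ↪ Δ^S`, for `T ⊆ S`. -/
def VRes (n : ℕ) (X : PtdTop) {S T : PosetP0 n} (g : T ⟶ S) :
    VObj n X S ⟶ VObj n X T :=
  Under.homMk
    (TopCat.ofHom ⟨fun φ => ⟨φ.val.comp (faceIncl (leOfHom g)).hom,
        fun j => φ.2 ⟨j.val, leOfHom g j.2⟩⟩,
      Continuous.subtype_mk
        ((ContinuousMap.continuous_precomp _).comp continuous_subtype_val) _⟩)
    (by ext u; exact Subtype.ext (ContinuousMap.ext fun t => rfl))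

/-- Postcomposition `V_X(S) → V_Y(S)` with a pointed map `f : X → Y`. -/
def VPost (n : ℕ) {X Y : PtdTop} (f : X ⟶ Y) (S : PosetP0 n) :
    VObj n X S ⟶ VObj n Y S :=
  Under.homMk
    (TopCat.ofHom ⟨fun φ => ⟨ContinuousMap.comp f.right.hom φ.val,
        fun j => by
          show f.right (φ.val (vertexPt S j)) = basept Y
          rw [φ.2 j, basept_map f]⟩,
      Continuous.subtype_mk
        ((ContinuousMap.continuous_postcomp _).comp continuous_subtype_val) _⟩)
    (by
      ext u
      exact Subtype.ext (ContinuousMap.ext fun t => basept_map f))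

/-- The co-reduced co-punctured cube `V_X : S ↦ V_X(S)`, contravariant in `S`. -/
def VDiagram (n : ℕ) (X : PtdTop) : (PosetP0 n)ᵒᵖ ⥤ PtdTop where
  obj S := VObj n X S.unop
  map {S T} f := VRes n X f.unop
  map_id S := by
    apply Under.UnderMorphism.ext
    ext φ
    exact Subtype.ext (ContinuousMap.ext fun t => rfl)
  map_comp f g := by
    apply Under.UnderMorphism.ext
    ext φ
    exact Subtype.ext (ContinuousMap.ext fun t => rfl)

/-- The functor `X ↦ V_X` from pointed spaces to co-punctured cubes of pointed spaces. -/
def VFunctor (n : ℕ) : PtdTop ⥤ ((PosetP0 n)ᵒᵖ ⥤ PtdTop) where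
  obj X := VDiagram n X
  map {X Y} f :=
    { app := fun S => VPost n f S.unop
      naturality := by
        intro S T g
        apply Under.UnderMorphism.ext
        ext φ
        exact Subtype.ext (ContinuousMap.ext fun t => rfl) }
  map_id X := by
    apply NatTrans.ext; funext S
    apply Under.UnderMorphism.ext
    ext φ
    exact Subtype.ext (ContinuousMap.ext fun t => rfl)
  map_comp f g := by
    apply NatTrans.ext; funext S
    apply Under.UnderMorphism.ext
    ext φ
    exact Subtype.ext (ContinuousMap.ext fun t => rfl)

/-- A diagram `𝒳 : P₀([n])ᵒᵖ ⥤ Top_*` is co-reduced if its value at every singleton is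
a one-point (zero) object. -/
def IsCoReducedPtdCube {n : ℕ} (𝒳 : (PosetP0 n)ᵒᵖ ⥤ PtdTop) : Prop :=
  ∀ j : Fin (n + 1), IsZero (𝒳.obj (Opposite.op (singletonObj n j)))

/-!
The left adjoint sends a diagram `F` to the reduced realization
`L(F) = (∐_S F(S) × Δ^S) / ~`, where `(φ, ι t) ~ (F(T ⊆ S) φ, t)` for the face inclusion
`ι : Δ^T ↪ Δ^S`, and every point `(φ, t)` with `φ` the basepoint or `t` a vertex is collapsed
to the basepoint. Since each `Δ^S` is locally compact, the exponential law identifies pointed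
maps `L(F) → X` with families of pointed maps `F(S) → C(Δ^S, X)` landing in `V_X(S)`; the face
relation is exactly naturality. The diagram `V_X` is co-reduced because `Δ^{j}` is a point.
-/

open Opposite

section Simplex

variable {n : ℕ}

instance simplexOn.locallyCompactSpace (S : Finset (Fin (n + 1))) :
    LocallyCompactSpace ↑(simplexOn n S) := by
  have hface : IsClosed {t : Fin (n + 1) → ℝ | ∀ i, i ∉ S → t i = 0} := by
    simp only [Set.ofPred_forall]
    exact isClosed_iInter fun i => isClosed_iInter fun _ =>
      isClosed_eq (continuous_apply i) continuous_const
  have hset : stdSimplex ℝ (Fin (n + 1)) ∩ {t | ∀ i, i ∉ S → t i = 0} =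
      {t | (∀ i, 0 ≤ t i) ∧ (∀ i, i ∉ S → t i = 0) ∧ ∑ i, t i = 1} := by
    ext t
    simp only [stdSimplex, Set.mem_inter_iff, Set.mem_ofPred_eq]
    tauto
  exact (hset ▸ (isClosed_stdSimplex ℝ (Fin (n + 1))).inter hface).locallyCompactSpace

lemma simplexOn_singleton_eq_vertexPt (j : Fin (n + 1))
    (t : ↑(simplexOn n (singletonObj n j).val)) :
    t = vertexPt (singletonObj n j) ⟨j, Finset.mem_singleton_self j⟩ := by
  have hzero : ∀ i, i ≠ j → t.val i = 0 := fun i hi =>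
    t.2.2.1 i (by simpa [singletonObj] using hi)
  apply Subtype.ext
  funext i
  show t.val i = if i = j then 1 else 0
  split_ifs with hij
  · subst hij
    simpa [Finset.sum_eq_single_of_mem i (Finset.mem_univ i) fun k _ hk => hzero k hk]
      using t.2.2.2
  · exact hzero i hij

end Simplex

instance VSet.uniqueOfSingleton (n : ℕ) (X : PtdTop) (j : Fin (n + 1)) :
    Unique (VSet n X (singletonObj n j)) where
  default := ⟨ContinuousMap.const _ (basept X), fun _ => rfl⟩
  uniq f := Subtype.ext <| ContinuousMap.ext fun t => by
    rw [simplexOn_singleton_eq_vertexPt j t]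
    exact f.2 _

lemma PtdTop.isZero_of_subsingleton (A : PtdTop) [Subsingleton A.right] : IsZero A := by
  have hpt : ∀ a : A.right, a = basept A := fun a => Subsingleton.elim a _
  constructor
  · intro Y
    refine ⟨⟨⟨Under.homMk (TopCat.ofHom (ContinuousMap.const _ (basept Y))) (by ext; rfl)⟩,
      fun f => ?_⟩⟩
    ext a
    rw [hpt a]
    exact basept_map f
  · intro Y
    refine ⟨⟨⟨Under.homMk (TopCat.ofHom (ContinuousMap.const _ (basept A)))
      (by ext; exact hpt _)⟩, fun f => ?_⟩⟩
    ext a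
    exact hpt _

lemma VDiagram_isCoReduced (n : ℕ) (X : PtdTop) : IsCoReducedPtdCube (VDiagram n X) :=
  fun j =>
    have : Subsingleton ((VDiagram n X).obj (op (singletonObj n j))).right :=
      inferInstanceAs (Subsingleton (VSet n X (singletonObj n j)))
    PtdTop.isZero_of_subsingleton _

section Realization

variable {n : ℕ} (F : (PosetP0 n)ᵒᵖ ⥤ PtdTop)

abbrev Cells : Type :=
  Σ S : PosetP0 n, ↑(F.obj (op S)).right × ↑(simplexOn n S.val)

def IsCollapsed (p : Cells F) : Prop :=
  p.2.1 = basept (F.obj (op p.1)) ∨ ∃ j, p.2.2 = vertexPt p.1 j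

inductive CellRel : Cells F → Cells F → Prop
  | face {T S : PosetP0 n} (h : T ⟶ S) (φ : ↑(F.obj (op S)).right)
      (t : ↑(simplexOn n T.val)) :
      CellRel ⟨S, φ, faceIncl (leOfHom h) t⟩ ⟨T, (F.map h.op).right φ, t⟩
  | collapse {p q : Cells F} : IsCollapsed F p → IsCollapsed F q → CellRel p q

def Cells.base : Cells F :=
  ⟨singletonObj n 0, basept _, vertexPt (singletonObj n 0) ⟨0, Finset.mem_singleton_self 0⟩⟩

lemma Cells.isCollapsed_base : IsCollapsed F (Cells.base F) :=
  Or.inl rfl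

def realization : PtdTop :=
  Under.mk (Y := TopCat.of (Quot (CellRel F)))
    (TopCat.ofHom (ContinuousMap.const _ (Quot.mk _ (Cells.base F))))

variable {F}

lemma realization_mk_eq_basept {p : Cells F} (hp : IsCollapsed F p) :
    (Quot.mk (CellRel F) p : (realization F).right) = basept (realization F) :=
  Quot.sound (.collapse hp (Cells.isCollapsed_base F))

lemma map_realization_mk_eq_basept {X : PtdTop} (f : realization F ⟶ X) {p : Cells F}
    (hp : IsCollapsed F p) : f.right (Quot.mk _ p) = basept X := by
  rw [realization_mk_eq_basept hp]
  exact basept_map f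

variable {X : PtdTop}

def Cells.eval (α : F ⟶ VDiagram n X) (p : Cells F) : ↑X.right :=
  ((α.app (op p.1)).right p.2.1).val p.2.2

lemma Cells.eval_of_isCollapsed (α : F ⟶ VDiagram n X) {p : Cells F}
    (hp : IsCollapsed F p) : Cells.eval α p = basept X := by
  obtain ⟨S, φ, t⟩ := p
  rcases hp with hφ | ⟨j, ht⟩
  · change φ = basept (F.obj (op S)) at hφ
    change ((α.app (op S)).right φ).val t = basept X
    rw [hφ, basept_map (α.app (op S))]
    rfl
  · change t = vertexPt S j at ht
    change ((α.app (op S)).right φ).val t = basept X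
    rw [ht]
    exact ((α.app (op S)).right φ).2 j

lemma Cells.eval_eq_of_cellRel (α : F ⟶ VDiagram n X) {p q : Cells F}
    (hpq : CellRel F p q) : Cells.eval α p = Cells.eval α q := by
  induction hpq with
  | @face T S h φ t =>
    have hnat := ConcreteCategory.congr_hom
      (congrArg CommaMorphism.right (α.naturality h.op)) φ
    exact congrArg (fun ψ : VSet n X T => ψ.val t) hnat.symm
  | collapse hp hq => rw [Cells.eval_of_isCollapsed α hp, Cells.eval_of_isCollapsed α hq]

lemma Cells.continuous_eval (α : F ⟶ VDiagram n X) : Continuous (Cells.eval α) :=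
  continuous_sigma fun S =>
    have hα : Continuous fun φ : ↑(F.obj (op S)).right => ((α.app (op S)).right φ).val :=
      continuous_subtype_val.comp (α.app (op S)).right.hom.continuous
    ContinuousEval.continuous_eval.comp ((hα.comp continuous_fst).prodMk continuous_snd)

def realizationDesc (α : F ⟶ VDiagram n X) : realization F ⟶ X :=
  Under.homMk
    (TopCat.ofHom ⟨Quot.lift (Cells.eval α) fun _ _ => Cells.eval_eq_of_cellRel α,
      continuous_quot_lift _ (Cells.continuous_eval α)⟩)
    (by ext u; exact Cells.eval_of_isCollapsed α (Cells.isCollapsed_base F))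

def realizationTransposeApp (f : realization F ⟶ X) (S : PosetP0 n) :
    F.obj (op S) ⟶ VObj n X S :=
  let fS : C(↑(F.obj (op S)).right × ↑(simplexOn n S.val), ↑X.right) :=
    ⟨fun q => f.right (Quot.mk _ ⟨S, q⟩),
      f.right.hom.continuous.comp (continuous_quot_mk.comp continuous_sigmaMk)⟩
  Under.homMk
    (TopCat.ofHom ⟨fun φ => ⟨fS.curry φ,
        fun j => map_realization_mk_eq_basept f (Or.inr ⟨j, rfl⟩)⟩,
      fS.curry.continuous.subtype_mk _⟩)
    (by
      ext u
      exact Subtype.ext <| ContinuousMap.ext fun _ =>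
        map_realization_mk_eq_basept f (Or.inl rfl))

def realizationTranspose (f : realization F ⟶ X) : F ⟶ VDiagram n X where
  app S := realizationTransposeApp f S.unop
  naturality S T g := by
    ext φ
    exact Subtype.ext <| ContinuousMap.ext fun t =>
      (congrArg f.right (Quot.sound (CellRel.face g.unop φ t))).symm

variable (F X)

def realizationHomEquiv : (realization F ⟶ X) ≃ (F ⟶ VDiagram n X) where
  toFun := realizationTranspose
  invFun := realizationDesc
  left_inv f := by
    ext q
    obtain ⟨S, φ, t⟩ := q
    rfl
  right_inv α := by
    ext S φ
    exact Subtype.ext <| ContinuousMap.ext fun t => rfl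

lemma realizationHomEquiv_comp {X' : PtdTop} (g : X ⟶ X') (f : realization F ⟶ X) :
    realizationHomEquiv F X' (f ≫ g) = realizationHomEquiv F X f ≫ (VFunctor n).map g := by
  ext S φ
  exact Subtype.ext <| ContinuousMap.ext fun t => rfl

end Realization

def realizationFunctor (n : ℕ) : ((PosetP0 n)ᵒᵖ ⥤ PtdTop) ⥤ PtdTop :=
  Adjunction.leftAdjointOfEquiv (G := VFunctor n) realizationHomEquiv
    fun F X _ => realizationHomEquiv_comp F X

def realizationAdjunction (n : ℕ) : realizationFunctor n ⊣ VFunctor n :=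
  Adjunction.adjunctionOfEquivLeft (G := VFunctor n) _ _

/-- `V_X(S)` is a one-point space whenever `S` is a singleton (so `V_X` is
a co-reduced diagram), and the resulting functor `R^n : Top_* ⥤ coRedFun_n`, `X ↦ V_X`,
into the full subcategory of co-reduced diagrams, admits a left adjoint `L^n`. -/
theorem VFunctor_isRightAdjoint (n : ℕ) :
    (∀ (X : PtdTop) (j : Fin (n + 1)), Nonempty (Unique (VSet n X (singletonObj n j)))) ∧
    ∃ Rn : PtdTop ⥤ ObjectProperty.FullSubcategory (IsCoReducedPtdCube (n := n)),
      Nonempty (Rn ⋙ ObjectProperty.ι (IsCoReducedPtdCube (n := n)) ≅ VFunctor n) ∧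
      Rn.IsRightAdjoint := by
  let Rn := ObjectProperty.lift _ (VFunctor n) (VDiagram_isCoReduced n)
  have hRn : Rn ⋙ ObjectProperty.ι _ ≅ VFunctor n := ObjectProperty.liftCompιIso _ _ _
  refine ⟨fun X j => ⟨inferInstance⟩, Rn, ⟨hRn⟩, ?_⟩
  exact ((realizationAdjunction n).restrictFullyFaithful (ObjectProperty.fullyFaithfulι _)
    (Functor.FullyFaithful.id _) (Functor.rightUnitor _).symm hRn.symm).isRightAdjoint
end
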